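/- arXiv:2311.14441 — 4 statements merged into one kernel-verified Lean document; each statement's English description precedes it below -/
import Mathlib

section
/- In an alternative ring, for all r, s, x, y, (r, s, (x·y)·x) = (x·(r, s, y))·x + ((x·y)·(r, s, x) + ((r, s, x)·y)·x). -/
/-- The associator in a (not necessarily associative) ring. -/
def assoc' {R : Type*} [NonUnitalNonAssocRing R] (a b c : R) : R :=
  (a * b) * c - a * (b * c)

set_option maxHeartbeats 2000000 in
/-- The quasi-Moufang identity in an alternative ring:
`(r, s, x·y·x) = x·(r, s, y)·x + {x, y, (r,s,x)}` where `{abc} = (a·b)·c + (c·b)·a`. -/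
theorem alt_assoc_conj {R : Type*} [NonUnitalNonAssocRing R]
    (hl : ∀ x y : R, (x * x) * y = x * (x * y))
    (hr : ∀ x y : R, (y * x) * x = y * (x * x))
    (r s x y : R) :
    assoc' r s ((x * y) * x) =
      (x * assoc' r s y) * x + ((x * y) * assoc' r s x + (assoc' r s x * y) * x) := by
  have hL : ∀ a b c : R, ((a * b) * c + (b * a) * c) - (a * (b * c) + b * (a * c)) = 0 := by
    intro a b c
    have e : ((a * b) * c + (b * a) * c) - (a * (b * c) + b * (a * c))
        = (((a + b) * (a + b)) * c - (a + b) * ((a + b) * c))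
          - (((a * a) * c - a * (a * c)) + ((b * b) * c - b * (b * c))) := by
      simp only [add_mul, mul_add]; abel
    rw [hl (a + b) c, hl a c, hl b c, sub_self, sub_self, sub_self] at e
    simpa using e
  have hR : ∀ a b c : R, ((a * b) * c + (a * c) * b) - (a * (b * c) + a * (c * b)) = 0 := by
    intro a b c
    have e : ((a * b) * c + (a * c) * b) - (a * (b * c) + a * (c * b))
        = ((a * (b + c)) * (b + c) - a * ((b + c) * (b + c)))
          - (((a * b) * b - a * (b * b)) + ((a * c) * c - a * (c * c))) := by
      simp only [add_mul, mul_add]; abel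
    rw [hr (b + c) a, hr b a, hr c a, sub_self, sub_self, sub_self] at e
    simpa using e
  have hlz : ∀ m : R, (x * x) * m - x * (x * m) = 0 := fun m => sub_eq_zero.mpr (hl x m)
  have hrz : ∀ m : R, (m * x) * x - m * (x * x) = 0 := fun m => sub_eq_zero.mpr (hr x m)
  have h0 : ((s * x) * (((y * r) * x + (y * x) * r) - (y * (r * x) + y * (x * r)))) = (0 : R) := by simp only [hR y r x, mul_zero, zero_mul] 
  have h1 : ((s * x) * (((y * x) * r + (x * y) * r) - (y * (x * r) + x * (y * r)))) = (0 : R) := by simp only [hL y x r, mul_zero, zero_mul] 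
  have h2 : (r * ((((s * y) * x + (y * s) * x) - (s * (y * x) + y * (s * x))) * x)) = (0 : R) := by simp only [hL s y x, mul_zero, zero_mul] 
  have h3 : (((x * x) * s - x * (x * s)) * (y * r)) = (0 : R) := by simp only [hlz s, mul_zero, zero_mul] 
  have h4 : (((s * x) * x - s * (x * x)) * (y * r)) = (0 : R) := by simp only [hrz s, mul_zero, zero_mul] 
  have h5 : (y * (r * ((s * x) * x - s * (x * x)))) = (0 : R) := by simp only [hrz s, mul_zero, zero_mul] 
  have h6 : (r * (y * ((s * x) * x - s * (x * x)))) = (0 : R) := by simp only [hrz s, mul_zero, zero_mul] 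
  have h7 : ((y * r) * ((x * x) * s - x * (x * s))) = (0 : R) := by simp only [hlz s, mul_zero, zero_mul] 
  have h8 : ((y * r) * ((s * x) * x - s * (x * x))) = (0 : R) := by simp only [hrz s, mul_zero, zero_mul] 
  have h9 : ((((s * x) * x - s * (x * x)) * y) * r) = (0 : R) := by simp only [hrz s, mul_zero, zero_mul] 
  have h10 : (((y * x) * x - y * (x * x)) * (r * s)) = (0 : R) := by simp only [hrz y, mul_zero, zero_mul] 
  have h11 : (r * (s * ((y * x) * x - y * (x * x)))) = (0 : R) := by simp only [hrz y, mul_zero, zero_mul] 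
  have h12 : (r * (s * (((y * x) * x + (x * y) * x) - (y * (x * x) + x * (y * x))))) = (0 : R) := by simp only [hL y x x, mul_zero, zero_mul] 
  have h13 : ((r * s) * ((y * x) * x - y * (x * x))) = (0 : R) := by simp only [hrz y, mul_zero, zero_mul] 
  have h14 : ((r * s) * (((y * x) * x + (x * y) * x) - (y * (x * x) + x * (y * x)))) = (0 : R) := by simp only [hL y x x, mul_zero, zero_mul] 
  have h15 : (x * ((((y * r) * s + (y * s) * r) - (y * (r * s) + y * (s * r))) * x)) = (0 : R) := by simp only [hR y r s, mul_zero, zero_mul] 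
  have h16 : ((x * (((r * s) * y + (s * r) * y) - (r * (s * y) + s * (r * y)))) * x) = (0 : R) := by simp only [hL r s y, mul_zero, zero_mul] 
  have h17 : ((x * (((s * r) * y + (s * y) * r) - (s * (r * y) + s * (y * r)))) * x) = (0 : R) := by simp only [hR s r y, mul_zero, zero_mul] 
  have h18 : ((x * (((s * y) * r + (y * s) * r) - (s * (y * r) + y * (s * r)))) * x) = (0 : R) := by simp only [hL s y r, mul_zero, zero_mul] 
  have h19 : ((((r * y) * (s * x) + (y * r) * (s * x)) - (r * (y * (s * x)) + y * (r * (s * x)))) * x) = (0 : R) := by simp only [hL r y (s * x), mul_zero, zero_mul] 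
  have h20 : ((((r * y) * (s * x) + (r * (s * x)) * y) - (r * (y * (s * x)) + r * ((s * x) * y))) * x) = (0 : R) := by simp only [hR r y (s * x), mul_zero, zero_mul] 
  have h21 : ((((s * x) * (y * r) + (x * s) * (y * r)) - (s * (x * (y * r)) + x * (s * (y * r)))) * x) = (0 : R) := by simp only [hL s x (y * r), mul_zero, zero_mul] 
  have h22 : ((((y * x) * (r * s) + (x * y) * (r * s)) - (y * (x * (r * s)) + x * (y * (r * s)))) * x) = (0 : R) := by simp only [hL y x (r * s), mul_zero, zero_mul] 
  have h23 : ((((y * (s * x)) * r + ((s * x) * y) * r) - (y * ((s * x) * r) + (s * x) * (y * r))) * x) = (0 : R) := by simp only [hL y (s * x) r, mul_zero, zero_mul] 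
  have h24 : ((((y * (r * s)) * x + ((r * s) * y) * x) - (y * ((r * s) * x) + (r * s) * (y * x))) * x) = (0 : R) := by simp only [hL y (r * s) x, mul_zero, zero_mul] 
  have h25 : ((((x * s) * (y * r) + (x * (y * r)) * s) - (x * (s * (y * r)) + x * ((y * r) * s))) * x) = (0 : R) := by simp only [hR x s (y * r), mul_zero, zero_mul] 
  have h26 : ((((x * y) * (r * s) + (x * (r * s)) * y) - (x * (y * (r * s)) + x * ((r * s) * y))) * x) = (0 : R) := by simp only [hR x y (r * s), mul_zero, zero_mul] 
  have h27 : ((((x * (y * r)) * s + ((y * r) * x) * s) - (x * ((y * r) * s) + (y * r) * (x * s))) * x) = (0 : R) := by simp only [hL x (y * r) s, mul_zero, zero_mul] 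
  have h28 : ((((x * (r * s)) * y + ((r * s) * x) * y) - (x * ((r * s) * y) + (r * s) * (x * y))) * x) = (0 : R) := by simp only [hL x (r * s) y, mul_zero, zero_mul] 
  have h29 : (((((r * s) * y) * x + ((r * s) * x) * y) - ((r * s) * (y * x) + (r * s) * (x * y))) * x) = (0 : R) := by simp only [hR (r * s) y x, mul_zero, zero_mul] 
  have h30 : (((((y * r) * s) * x + ((y * r) * x) * s) - ((y * r) * (s * x) + (y * r) * (x * s))) * x) = (0 : R) := by simp only [hR (y * r) s x, mul_zero, zero_mul] 
  have h31 : (x * (((s * x) * (y * r) + (x * s) * (y * r)) - (s * (x * (y * r)) + x * (s * (y * r))))) = (0 : R) := by simp only [hL s x (y * r), mul_zero, zero_mul] 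
  have h32 : (x * (((s * x) * (y * r) + (s * (y * r)) * x) - (s * (x * (y * r)) + s * ((y * r) * x)))) = (0 : R) := by simp only [hR s x (y * r), mul_zero, zero_mul] 
  have h33 : (x * (((s * (y * r)) * x + ((y * r) * s) * x) - (s * ((y * r) * x) + (y * r) * (s * x)))) = (0 : R) := by simp only [hL s (y * r) x, mul_zero, zero_mul] 
  have h34 : (x * (((y * r) * (s * x) + (y * (s * x)) * r) - (y * (r * (s * x)) + y * ((s * x) * r)))) = (0 : R) := by simp only [hR y r (s * x), mul_zero, zero_mul] 
  have h35 : (x * (((y * (r * s)) * x + ((r * s) * y) * x) - (y * ((r * s) * x) + (r * s) * (y * x)))) = (0 : R) := by simp only [hL y (r * s) x, mul_zero, zero_mul] 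
  have h36 : (y * ((x * x) * (r * s) - x * (x * (r * s)))) = (0 : R) := by simp only [hlz (r * s), mul_zero, zero_mul] 
  have h37 : (y * (((r * s) * x) * x - (r * s) * (x * x))) = (0 : R) := by simp only [hrz (r * s), mul_zero, zero_mul] 
  have h38 : (y * (((r * (s * x)) * x + ((s * x) * r) * x) - (r * ((s * x) * x) + (s * x) * (r * x)))) = (0 : R) := by simp only [hL r (s * x) x, mul_zero, zero_mul] 
  have h39 : (y * (((x * (r * s)) * x + ((r * s) * x) * x) - (x * ((r * s) * x) + (r * s) * (x * x)))) = (0 : R) := by simp only [hL x (r * s) x, mul_zero, zero_mul] 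
  have h40 : ((((x * y) * (s * x) + (x * (s * x)) * y) - (x * (y * (s * x)) + x * ((s * x) * y))) * r) = (0 : R) := by simp only [hR x y (s * x), mul_zero, zero_mul] 
  have h41 : ((((x * (s * x)) * y + ((s * x) * x) * y) - (x * ((s * x) * y) + (s * x) * (x * y))) * r) = (0 : R) := by simp only [hL x (s * x) y, mul_zero, zero_mul] 
  have h42 : (r * (((s * y) * x) * x - (s * y) * (x * x))) = (0 : R) := by simp only [hrz (s * y), mul_zero, zero_mul] 
  have h43 : (r * (((y * s) * x) * x - (y * s) * (x * x))) = (0 : R) := by simp only [hrz (y * s), mul_zero, zero_mul] 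
  have h44 : (r * (((s * y) * (x * x) + (y * s) * (x * x)) - (s * (y * (x * x)) + y * (s * (x * x))))) = (0 : R) := by simp only [hL s y (x * x), mul_zero, zero_mul] 
  have h45 : (r * (((s * x) * (y * x) + (s * (y * x)) * x) - (s * (x * (y * x)) + s * ((y * x) * x)))) = (0 : R) := by simp only [hR s x (y * x), mul_zero, zero_mul] 
  have h46 : (r * (((y * (s * x)) * x + ((s * x) * y) * x) - (y * ((s * x) * x) + (s * x) * (y * x)))) = (0 : R) := by simp only [hL y (s * x) x, mul_zero, zero_mul] 
  have h47 : ((((y * r) * x) * x - (y * r) * (x * x)) * s) = (0 : R) := by simp only [hrz (y * r), mul_zero, zero_mul] 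
  have h48 : (s * ((x * x) * (y * r) - x * (x * (y * r)))) = (0 : R) := by simp only [hlz (y * r), mul_zero, zero_mul] 
  have h49 : (s * (((y * r) * x) * x - (y * r) * (x * x))) = (0 : R) := by simp only [hrz (y * r), mul_zero, zero_mul] 
  have h50 : (s * (((x * (y * r)) * x + ((y * r) * x) * x) - (x * ((y * r) * x) + (y * r) * (x * x)))) = (0 : R) := by simp only [hL x (y * r) x, mul_zero, zero_mul] 
  have h51 : ((x * x) * (s * (y * r)) - x * (x * (s * (y * r)))) = (0 : R) := by simp only [hlz (s * (y * r)), mul_zero, zero_mul] 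
  have h52 : (((y * (r * s)) * x) * x - (y * (r * s)) * (x * x)) = (0 : R) := by simp only [hrz (y * (r * s)), mul_zero, zero_mul] 
  have h53 : ((x * x) * (y * (s * r)) - x * (x * (y * (s * r)))) = (0 : R) := by simp only [hlz (y * (s * r)), mul_zero, zero_mul] 
  have h54 : ((((y * r) * s) * x) * x - ((y * r) * s) * (x * x)) = (0 : R) := by simp only [hrz ((y * r) * s), mul_zero, zero_mul] 
  have h55 : ((x * x) * ((y * s) * r) - x * (x * ((y * s) * r))) = (0 : R) := by simp only [hlz ((y * s) * r), mul_zero, zero_mul] 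
  have h56 : ((((r * s) * y) * x) * x - ((r * s) * y) * (x * x)) = (0 : R) := by simp only [hrz ((r * s) * y), mul_zero, zero_mul] 
  have h57 : (((r * ((s * x) * y)) * x + (((s * x) * y) * r) * x) - (r * (((s * x) * y) * x) + ((s * x) * y) * (r * x))) = (0 : R) := by simp only [hL r ((s * x) * y) x, mul_zero, zero_mul] 
  have h58 : (((s * x) * (x * (y * r)) + (s * (x * (y * r))) * x) - (s * (x * (x * (y * r))) + s * ((x * (y * r)) * x))) = (0 : R) := by simp only [hR s x (x * (y * r)), mul_zero, zero_mul] 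
  have h59 : (((s * x) * ((y * r) * x) + (s * ((y * r) * x)) * x) - (s * (x * ((y * r) * x)) + s * (((y * r) * x) * x))) = (0 : R) := by simp only [hR s x ((y * r) * x), mul_zero, zero_mul] 
  have h60 : (((s * (x * x)) * (y * r) + ((x * x) * s) * (y * r)) - (s * ((x * x) * (y * r)) + (x * x) * (s * (y * r)))) = (0 : R) := by simp only [hL s (x * x) (y * r), mul_zero, zero_mul] 
  have h61 : (((s * ((y * r) * x)) * x + (((y * r) * x) * s) * x) - (s * (((y * r) * x) * x) + ((y * r) * x) * (s * x))) = (0 : R) := by simp only [hL s ((y * r) * x) x, mul_zero, zero_mul] 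
  have h62 : (((y * r) * (s * (x * x)) + (y * (s * (x * x))) * r) - (y * (r * (s * (x * x))) + y * ((s * (x * x)) * r))) = (0 : R) := by simp only [hR y r (s * (x * x)), mul_zero, zero_mul] 
  have h63 : (((y * x) * (r * (s * x)) + (x * y) * (r * (s * x))) - (y * (x * (r * (s * x))) + x * (y * (r * (s * x))))) = (0 : R) := by simp only [hL y x (r * (s * x)), mul_zero, zero_mul] 
  have h64 : (((y * x) * (r * (s * x)) + (y * (r * (s * x))) * x) - (y * (x * (r * (s * x))) + y * ((r * (s * x)) * x))) = (0 : R) := by simp only [hR y x (r * (s * x)), mul_zero, zero_mul] 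
  have h65 : (((y * x) * (x * (r * s)) + (y * (x * (r * s))) * x) - (y * (x * (x * (r * s))) + y * ((x * (r * s)) * x))) = (0 : R) := by simp only [hR y x (x * (r * s)), mul_zero, zero_mul] 
  have h66 : (((y * x) * ((s * x) * r) + (x * y) * ((s * x) * r)) - (y * (x * ((s * x) * r)) + x * (y * ((s * x) * r)))) = (0 : R) := by simp only [hL y x ((s * x) * r), mul_zero, zero_mul] 
  have h67 : (((y * x) * ((s * x) * r) + (y * ((s * x) * r)) * x) - (y * (x * ((s * x) * r)) + y * (((s * x) * r) * x))) = (0 : R) := by simp only [hR y x ((s * x) * r), mul_zero, zero_mul] 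
  have h68 : (((y * x) * ((r * s) * x) + (x * y) * ((r * s) * x)) - (y * (x * ((r * s) * x)) + x * (y * ((r * s) * x)))) = (0 : R) := by simp only [hL y x ((r * s) * x), mul_zero, zero_mul] 
  have h69 : (((y * (x * x)) * (r * s) + (y * (r * s)) * (x * x)) - (y * ((x * x) * (r * s)) + y * ((r * s) * (x * x)))) = (0 : R) := by simp only [hR y (x * x) (r * s), mul_zero, zero_mul] 
  have h70 : (((y * (s * x)) * (r * x) + ((s * x) * y) * (r * x)) - (y * ((s * x) * (r * x)) + (s * x) * (y * (r * x)))) = (0 : R) := by simp only [hL y (s * x) (r * x), mul_zero, zero_mul] 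
  have h71 : (((y * (r * s)) * (x * x) + ((r * s) * y) * (x * x)) - (y * ((r * s) * (x * x)) + (r * s) * (y * (x * x)))) = (0 : R) := by simp only [hL y (r * s) (x * x), mul_zero, zero_mul] 
  have h72 : (((y * (x * (r * s))) * x + ((x * (r * s)) * y) * x) - (y * ((x * (r * s)) * x) + (x * (r * s)) * (y * x))) = (0 : R) := by simp only [hL y (x * (r * s)) x, mul_zero, zero_mul] 
  have h73 : (((y * ((r * s) * x)) * x + (((r * s) * x) * y) * x) - (y * (((r * s) * x) * x) + ((r * s) * x) * (y * x))) = (0 : R) := by simp only [hL y ((r * s) * x) x, mul_zero, zero_mul] 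
  have h74 : (((y * (s * (x * x))) * r + ((s * (x * x)) * y) * r) - (y * ((s * (x * x)) * r) + (s * (x * x)) * (y * r))) = (0 : R) := by simp only [hL y (s * (x * x)) r, mul_zero, zero_mul] 
  have h75 : (((x * x) * (y * (s * r)) + (x * (y * (s * r))) * x) - (x * (x * (y * (s * r))) + x * ((y * (s * r)) * x))) = (0 : R) := by simp only [hR x x (y * (s * r)), mul_zero, zero_mul] 
  have h76 : (((x * x) * ((y * s) * r) + (x * ((y * s) * r)) * x) - (x * (x * ((y * s) * r)) + x * (((y * s) * r) * x))) = (0 : R) := by simp only [hR x x ((y * s) * r), mul_zero, zero_mul] 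
  have h77 : (((x * (y * x)) * (r * s) + ((y * x) * x) * (r * s)) - (x * ((y * x) * (r * s)) + (y * x) * (x * (r * s)))) = (0 : R) := by simp only [hL x (y * x) (r * s), mul_zero, zero_mul] 
  have h78 : (((x * (y * x)) * (r * s) + (x * (r * s)) * (y * x)) - (x * ((y * x) * (r * s)) + x * ((r * s) * (y * x)))) = (0 : R) := by simp only [hR x (y * x) (r * s), mul_zero, zero_mul] 
  have h79 : (((x * (y * r)) * (x * s) + ((y * r) * x) * (x * s)) - (x * ((y * r) * (x * s)) + (y * r) * (x * (x * s)))) = (0 : R) := by simp only [hL x (y * r) (x * s), mul_zero, zero_mul] 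
  have h80 : (((x * (y * r)) * (x * s) + (x * (x * s)) * (y * r)) - (x * ((y * r) * (x * s)) + x * ((x * s) * (y * r)))) = (0 : R) := by simp only [hR x (y * r) (x * s), mul_zero, zero_mul] 
  have h81 : (((x * (y * (s * x))) * r + ((y * (s * x)) * x) * r) - (x * ((y * (s * x)) * r) + (y * (s * x)) * (x * r))) = (0 : R) := by simp only [hL x (y * (s * x)) r, mul_zero, zero_mul] 
  have h82 : (((x * ((r * s) * y)) * x + (((r * s) * y) * x) * x) - (x * (((r * s) * y) * x) + ((r * s) * y) * (x * x))) = (0 : R) := by simp only [hL x ((r * s) * y) x, mul_zero, zero_mul] 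
  have h83 : ((((y * x) * x) * (r * s) + ((y * x) * (r * s)) * x) - ((y * x) * (x * (r * s)) + (y * x) * ((r * s) * x))) = (0 : R) := by simp only [hR (y * x) x (r * s), mul_zero, zero_mul] 
  have h84 : ((((x * y) * (s * x)) * r + ((s * x) * (x * y)) * r) - ((x * y) * ((s * x) * r) + (s * x) * ((x * y) * r))) = (0 : R) := by simp only [hL (x * y) (s * x) r, mul_zero, zero_mul] 
  have h85 : ((((y * x) * (r * s)) * x + ((r * s) * (y * x)) * x) - ((y * x) * ((r * s) * x) + (r * s) * ((y * x) * x))) = (0 : R) := by simp only [hL (y * x) (r * s) x, mul_zero, zero_mul] 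
  have h86 : ((((r * s) * x) * (y * x) + ((r * s) * (y * x)) * x) - ((r * s) * (x * (y * x)) + (r * s) * ((y * x) * x))) = (0 : R) := by simp only [hR (r * s) x (y * x), mul_zero, zero_mul] 
  have h87 : ((((y * r) * s) * (x * x) + ((y * r) * (x * x)) * s) - ((y * r) * (s * (x * x)) + (y * r) * ((x * x) * s))) = (0 : R) := by simp only [hR (y * r) s (x * x), mul_zero, zero_mul] 
  have h88 : ((((y * r) * (s * x)) * x + ((s * x) * (y * r)) * x) - ((y * r) * ((s * x) * x) + (s * x) * ((y * r) * x))) = (0 : R) := by simp only [hL (y * r) (s * x) x, mul_zero, zero_mul] 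
  have h89 : ((((s * x) * x) * (y * r) + ((s * x) * (y * r)) * x) - ((s * x) * (x * (y * r)) + (s * x) * ((y * r) * x))) = (0 : R) := by simp only [hR (s * x) x (y * r), mul_zero, zero_mul] 
  have h90 : (((((y * r) * x) * s) * x + (((y * r) * x) * x) * s) - (((y * r) * x) * (s * x) + ((y * r) * x) * (x * s))) = (0 : R) := by simp only [hR ((y * r) * x) s x, mul_zero, zero_mul] 
  have h91 : ((((y * (s * x)) * r) * x + ((y * (s * x)) * x) * r) - ((y * (s * x)) * (r * x) + (y * (s * x)) * (x * r))) = (0 : R) := by simp only [hR (y * (s * x)) r x, mul_zero, zero_mul] 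
  have key : (assoc' r s ((x * y) * x)) - ((x * assoc' r s y) * x + ((x * y) * assoc' r s x + (assoc' r s x * y) * x)) = (-1 : ℤ) • ((s * x) * (((y * r) * x + (y * x) * r) - (y * (r * x) + y * (x * r))))
      + (1 : ℤ) • ((s * x) * (((y * x) * r + (x * y) * r) - (y * (x * r) + x * (y * r))))
      + (1 : ℤ) • (r * ((((s * y) * x + (y * s) * x) - (s * (y * x) + y * (s * x))) * x))
      + (-1 : ℤ) • (((x * x) * s - x * (x * s)) * (y * r))
      + (2 : ℤ) • (((s * x) * x - s * (x * x)) * (y * r))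
      + (-1 : ℤ) • (y * (r * ((s * x) * x - s * (x * x))))
      + (1 : ℤ) • (r * (y * ((s * x) * x - s * (x * x))))
      + (-1 : ℤ) • ((y * r) * ((x * x) * s - x * (x * s)))
      + (2 : ℤ) • ((y * r) * ((s * x) * x - s * (x * x)))
      + (-1 : ℤ) • ((((s * x) * x - s * (x * x)) * y) * r)
      + (-2 : ℤ) • (((y * x) * x - y * (x * x)) * (r * s))
      + (2 : ℤ) • (r * (s * ((y * x) * x - y * (x * x))))
      + (-1 : ℤ) • (r * (s * (((y * x) * x + (x * y) * x) - (y * (x * x) + x * (y * x)))))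
      + (-4 : ℤ) • ((r * s) * ((y * x) * x - y * (x * x)))
      + (1 : ℤ) • ((r * s) * (((y * x) * x + (x * y) * x) - (y * (x * x) + x * (y * x))))
      + (1 : ℤ) • (x * ((((y * r) * s + (y * s) * r) - (y * (r * s) + y * (s * r))) * x))
      + (-1 : ℤ) • ((x * (((r * s) * y + (s * r) * y) - (r * (s * y) + s * (r * y)))) * x)
      + (1 : ℤ) • ((x * (((s * r) * y + (s * y) * r) - (s * (r * y) + s * (y * r)))) * x)
      + (-1 : ℤ) • ((x * (((s * y) * r + (y * s) * r) - (s * (y * r) + y * (s * r)))) * x)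
      + (-1 : ℤ) • ((((r * y) * (s * x) + (y * r) * (s * x)) - (r * (y * (s * x)) + y * (r * (s * x)))) * x)
      + (1 : ℤ) • ((((r * y) * (s * x) + (r * (s * x)) * y) - (r * (y * (s * x)) + r * ((s * x) * y))) * x)
      + (-1 : ℤ) • ((((s * x) * (y * r) + (x * s) * (y * r)) - (s * (x * (y * r)) + x * (s * (y * r)))) * x)
      + (1 : ℤ) • ((((y * x) * (r * s) + (x * y) * (r * s)) - (y * (x * (r * s)) + x * (y * (r * s)))) * x)
      + (-1 : ℤ) • ((((y * (s * x)) * r + ((s * x) * y) * r) - (y * ((s * x) * r) + (s * x) * (y * r))) * x)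
      + (-1 : ℤ) • ((((y * (r * s)) * x + ((r * s) * y) * x) - (y * ((r * s) * x) + (r * s) * (y * x))) * x)
      + (1 : ℤ) • ((((x * s) * (y * r) + (x * (y * r)) * s) - (x * (s * (y * r)) + x * ((y * r) * s))) * x)
      + (-1 : ℤ) • ((((x * y) * (r * s) + (x * (r * s)) * y) - (x * (y * (r * s)) + x * ((r * s) * y))) * x)
      + (-1 : ℤ) • ((((x * (y * r)) * s + ((y * r) * x) * s) - (x * ((y * r) * s) + (y * r) * (x * s))) * x)
      + (2 : ℤ) • ((((x * (r * s)) * y + ((r * s) * x) * y) - (x * ((r * s) * y) + (r * s) * (x * y))) * x)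
      + (-2 : ℤ) • (((((r * s) * y) * x + ((r * s) * x) * y) - ((r * s) * (y * x) + (r * s) * (x * y))) * x)
      + (1 : ℤ) • (((((y * r) * s) * x + ((y * r) * x) * s) - ((y * r) * (s * x) + (y * r) * (x * s))) * x)
      + (-1 : ℤ) • (x * (((s * x) * (y * r) + (x * s) * (y * r)) - (s * (x * (y * r)) + x * (s * (y * r)))))
      + (1 : ℤ) • (x * (((s * x) * (y * r) + (s * (y * r)) * x) - (s * (x * (y * r)) + s * ((y * r) * x))))
      + (-1 : ℤ) • (x * (((s * (y * r)) * x + ((y * r) * s) * x) - (s * ((y * r) * x) + (y * r) * (s * x))))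
      + (-1 : ℤ) • (x * (((y * r) * (s * x) + (y * (s * x)) * r) - (y * (r * (s * x)) + y * ((s * x) * r))))
      + (1 : ℤ) • (x * (((y * (r * s)) * x + ((r * s) * y) * x) - (y * ((r * s) * x) + (r * s) * (y * x))))
      + (-2 : ℤ) • (y * ((x * x) * (r * s) - x * (x * (r * s))))
      + (-2 : ℤ) • (y * (((r * s) * x) * x - (r * s) * (x * x)))
      + (-1 : ℤ) • (y * (((r * (s * x)) * x + ((s * x) * r) * x) - (r * ((s * x) * x) + (s * x) * (r * x))))
      + (1 : ℤ) • (y * (((x * (r * s)) * x + ((r * s) * x) * x) - (x * ((r * s) * x) + (r * s) * (x * x))))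
      + (-1 : ℤ) • ((((x * y) * (s * x) + (x * (s * x)) * y) - (x * (y * (s * x)) + x * ((s * x) * y))) * r)
      + (1 : ℤ) • ((((x * (s * x)) * y + ((s * x) * x) * y) - (x * ((s * x) * y) + (s * x) * (x * y))) * r)
      + (-1 : ℤ) • (r * (((s * y) * x) * x - (s * y) * (x * x)))
      + (-1 : ℤ) • (r * (((y * s) * x) * x - (y * s) * (x * x)))
      + (-1 : ℤ) • (r * (((s * y) * (x * x) + (y * s) * (x * x)) - (s * (y * (x * x)) + y * (s * (x * x)))))
      + (1 : ℤ) • (r * (((s * x) * (y * x) + (s * (y * x)) * x) - (s * (x * (y * x)) + s * ((y * x) * x))))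
      + (1 : ℤ) • (r * (((y * (s * x)) * x + ((s * x) * y) * x) - (y * ((s * x) * x) + (s * x) * (y * x))))
      + (-1 : ℤ) • ((((y * r) * x) * x - (y * r) * (x * x)) * s)
      + (1 : ℤ) • (s * ((x * x) * (y * r) - x * (x * (y * r))))
      + (1 : ℤ) • (s * (((y * r) * x) * x - (y * r) * (x * x)))
      + (-1 : ℤ) • (s * (((x * (y * r)) * x + ((y * r) * x) * x) - (x * ((y * r) * x) + (y * r) * (x * x))))
      + (1 : ℤ) • ((x * x) * (s * (y * r)) - x * (x * (s * (y * r))))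
      + (1 : ℤ) • (((y * (r * s)) * x) * x - (y * (r * s)) * (x * x))
      + (1 : ℤ) • ((x * x) * (y * (s * r)) - x * (x * (y * (s * r))))
      + (-1 : ℤ) • ((((y * r) * s) * x) * x - ((y * r) * s) * (x * x))
      + (-1 : ℤ) • ((x * x) * ((y * s) * r) - x * (x * ((y * s) * r)))
      + (2 : ℤ) • ((((r * s) * y) * x) * x - ((r * s) * y) * (x * x))
      + (1 : ℤ) • (((r * ((s * x) * y)) * x + (((s * x) * y) * r) * x) - (r * (((s * x) * y) * x) + ((s * x) * y) * (r * x)))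
      + (-1 : ℤ) • (((s * x) * (x * (y * r)) + (s * (x * (y * r))) * x) - (s * (x * (x * (y * r))) + s * ((x * (y * r)) * x)))
      + (1 : ℤ) • (((s * x) * ((y * r) * x) + (s * ((y * r) * x)) * x) - (s * (x * ((y * r) * x)) + s * (((y * r) * x) * x)))
      + (1 : ℤ) • (((s * (x * x)) * (y * r) + ((x * x) * s) * (y * r)) - (s * ((x * x) * (y * r)) + (x * x) * (s * (y * r))))
      + (-1 : ℤ) • (((s * ((y * r) * x)) * x + (((y * r) * x) * s) * x) - (s * (((y * r) * x) * x) + ((y * r) * x) * (s * x)))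
      + (1 : ℤ) • (((y * r) * (s * (x * x)) + (y * (s * (x * x))) * r) - (y * (r * (s * (x * x))) + y * ((s * (x * x)) * r)))
      + (1 : ℤ) • (((y * x) * (r * (s * x)) + (x * y) * (r * (s * x))) - (y * (x * (r * (s * x))) + x * (y * (r * (s * x)))))
      + (-1 : ℤ) • (((y * x) * (r * (s * x)) + (y * (r * (s * x))) * x) - (y * (x * (r * (s * x))) + y * ((r * (s * x)) * x)))
      + (2 : ℤ) • (((y * x) * (x * (r * s)) + (y * (x * (r * s))) * x) - (y * (x * (x * (r * s))) + y * ((x * (r * s)) * x)))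
      + (1 : ℤ) • (((y * x) * ((s * x) * r) + (x * y) * ((s * x) * r)) - (y * (x * ((s * x) * r)) + x * (y * ((s * x) * r))))
      + (-1 : ℤ) • (((y * x) * ((s * x) * r) + (y * ((s * x) * r)) * x) - (y * (x * ((s * x) * r)) + y * (((s * x) * r) * x)))
      + (-1 : ℤ) • (((y * x) * ((r * s) * x) + (x * y) * ((r * s) * x)) - (y * (x * ((r * s) * x)) + x * (y * ((r * s) * x))))
      + (-2 : ℤ) • (((y * (x * x)) * (r * s) + (y * (r * s)) * (x * x)) - (y * ((x * x) * (r * s)) + y * ((r * s) * (x * x))))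
      + (1 : ℤ) • (((y * (s * x)) * (r * x) + ((s * x) * y) * (r * x)) - (y * ((s * x) * (r * x)) + (s * x) * (y * (r * x))))
      + (3 : ℤ) • (((y * (r * s)) * (x * x) + ((r * s) * y) * (x * x)) - (y * ((r * s) * (x * x)) + (r * s) * (y * (x * x))))
      + (-1 : ℤ) • (((y * (x * (r * s))) * x + ((x * (r * s)) * y) * x) - (y * ((x * (r * s)) * x) + (x * (r * s)) * (y * x)))
      + (-1 : ℤ) • (((y * ((r * s) * x)) * x + (((r * s) * x) * y) * x) - (y * (((r * s) * x) * x) + ((r * s) * x) * (y * x)))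
      + (-1 : ℤ) • (((y * (s * (x * x))) * r + ((s * (x * x)) * y) * r) - (y * ((s * (x * x)) * r) + (s * (x * x)) * (y * r)))
      + (-1 : ℤ) • (((x * x) * (y * (s * r)) + (x * (y * (s * r))) * x) - (x * (x * (y * (s * r))) + x * ((y * (s * r)) * x)))
      + (1 : ℤ) • (((x * x) * ((y * s) * r) + (x * ((y * s) * r)) * x) - (x * (x * ((y * s) * r)) + x * (((y * s) * r) * x)))
      + (1 : ℤ) • (((x * (y * x)) * (r * s) + ((y * x) * x) * (r * s)) - (x * ((y * x) * (r * s)) + (y * x) * (x * (r * s))))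
      + (-1 : ℤ) • (((x * (y * x)) * (r * s) + (x * (r * s)) * (y * x)) - (x * ((y * x) * (r * s)) + x * ((r * s) * (y * x))))
      + (1 : ℤ) • (((x * (y * r)) * (x * s) + ((y * r) * x) * (x * s)) - (x * ((y * r) * (x * s)) + (y * r) * (x * (x * s))))
      + (-1 : ℤ) • (((x * (y * r)) * (x * s) + (x * (x * s)) * (y * r)) - (x * ((y * r) * (x * s)) + x * ((x * s) * (y * r))))
      + (-1 : ℤ) • (((x * (y * (s * x))) * r + ((y * (s * x)) * x) * r) - (x * ((y * (s * x)) * r) + (y * (s * x)) * (x * r)))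
      + (1 : ℤ) • (((x * ((r * s) * y)) * x + (((r * s) * y) * x) * x) - (x * (((r * s) * y) * x) + ((r * s) * y) * (x * x)))
      + (1 : ℤ) • ((((y * x) * x) * (r * s) + ((y * x) * (r * s)) * x) - ((y * x) * (x * (r * s)) + (y * x) * ((r * s) * x)))
      + (1 : ℤ) • ((((x * y) * (s * x)) * r + ((s * x) * (x * y)) * r) - ((x * y) * ((s * x) * r) + (s * x) * ((x * y) * r)))
      + (-2 : ℤ) • ((((y * x) * (r * s)) * x + ((r * s) * (y * x)) * x) - ((y * x) * ((r * s) * x) + (r * s) * ((y * x) * x)))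
      + (-1 : ℤ) • ((((r * s) * x) * (y * x) + ((r * s) * (y * x)) * x) - ((r * s) * (x * (y * x)) + (r * s) * ((y * x) * x)))
      + (-1 : ℤ) • ((((y * r) * s) * (x * x) + ((y * r) * (x * x)) * s) - ((y * r) * (s * (x * x)) + (y * r) * ((x * x) * s)))
      + (2 : ℤ) • ((((y * r) * (s * x)) * x + ((s * x) * (y * r)) * x) - ((y * r) * ((s * x) * x) + (s * x) * ((y * r) * x)))
      + (-2 : ℤ) • ((((s * x) * x) * (y * r) + ((s * x) * (y * r)) * x) - ((s * x) * (x * (y * r)) + (s * x) * ((y * r) * x)))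
      + (1 : ℤ) • (((((y * r) * x) * s) * x + (((y * r) * x) * x) * s) - (((y * r) * x) * (s * x) + ((y * r) * x) * (x * s)))
      + (1 : ℤ) • ((((y * (s * x)) * r) * x + ((y * (s * x)) * x) * r) - ((y * (s * x)) * (r * x) + (y * (s * x)) * (x * r))) := by
    simp only [assoc', mul_add, add_mul, mul_sub, sub_mul]
    abel
  simp only [h0, h1, h2, h3, h4, h5, h6, h7, h8, h9, h10, h11, h12, h13, h14, h15, h16, h17, h18, h19, h20, h21, h22, h23, h24, h25, h26, h27, h28, h29, h30, h31, h32, h33, h34, h35, h36, h37, h38, h39, h40, h41, h42, h43, h44, h45, h46, h47, h48, h49, h50, h51, h52, h53, h54, h55, h56, h57, h58, h59, h60, h61, h62, h63, h64, h65, h66, h67, h68, h69, h70, h71, h72, h73, h74, h75, h76, h77, h78, h79, h80, h81, h82, h83, h84, h85, h86, h87, h88, h89, h90, h91, smul_zero, add_zero, zero_add] at key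
  exact sub_eq_zero.mp key
end

section
/- Let A be an alternative ring, N(A) its nucleus, and D(A) its associator ideal. Then for all n, m ∈ N(A) and a, b, c ∈ A, the commutator [n, m] = n·m − m·n annihilates every associator: [n, m]·(a, b, c) = 0. -/
/-- The nucleus of a nonassociative ring: elements associating with all pairs. -/
def nucleus (A : Type*) [NonUnitalNonAssocRing A] : Set A :=
  {n | ∀ a b : A, (n * a) * b - n * (a * b) = 0 ∧ (a * n) * b - a * (n * b) = 0 ∧
    (a * b) * n - a * (b * n) = 0}

/-- In an alternative ring, commutators of nuclear elements annihilate associators: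
`[n, m]·(a, b, c) = 0` for `n, m ∈ N(A)` and all `a, b, c ∈ A`. -/
theorem nucleus_comm_mul_assoc_eq_zero {A : Type*} [NonUnitalNonAssocRing A]
    (hl : ∀ x y : A, (x * x) * y = x * (x * y))
    (hr : ∀ x y : A, (y * x) * x = y * (x * x))
    (n m : A) (hn : n ∈ nucleus A) (hm : m ∈ nucleus A) (a b c : A) :
    (n * m - m * n) * ((a * b) * c - a * (b * c)) = 0 := by
  have n1 : ∀ u v : A, (n * u) * v = n * (u * v) := fun u v => sub_eq_zero.mp (hn u v).1
  have n2 : ∀ u v : A, (u * n) * v = u * (n * v) := fun u v => sub_eq_zero.mp (hn u v).2.1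
  have m1 : ∀ u v : A, (m * u) * v = m * (u * v) := fun u v => sub_eq_zero.mp (hm u v).1
  have m2 : ∀ u v : A, (u * m) * v = u * (m * v) := fun u v => sub_eq_zero.mp (hm u v).2.1
  -- linearized left alternative law: the associator is skew in its first two arguments
  have lin : ∀ x y z : A, (x * y) * z - x * (y * z) = -((y * x) * z - y * (x * z)) := by
    intro x y z
    have h := hl (x + y) z
    simp only [add_mul, mul_add] at h
    rw [hl x z, hl y z] at h
    linear_combination (norm := abel) h
  -- L1: a left-nuclear element in the first slot pulls out of the associator
  have L1 : ∀ (p : A), (∀ u v : A, (p * u) * v = p * (u * v)) →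
      ∀ x y z : A, ((p * x) * y) * z - (p * x) * (y * z)
        = p * ((x * y) * z - x * (y * z)) := by
    intro p hp x y z
    rw [hp x y, hp (x * y) z, hp x (y * z), mul_sub]
  -- L3: a nuclear element multiplying the middle slot from the left pulls out
  have L3 : ∀ (p : A), (∀ u v : A, (p * u) * v = p * (u * v)) →
      ∀ x y z : A, (x * (p * y)) * z - x * ((p * y) * z)
        = p * ((x * y) * z - x * (y * z)) := by
    intro p hp x y z
    calc (x * (p * y)) * z - x * ((p * y) * z)
        = -(((p * y) * x) * z - (p * y) * (x * z)) := lin x (p * y) z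
      _ = -(p * ((y * x) * z - y * (x * z))) := by rw [L1 p hp y x z]
      _ = -(p * (-((x * y) * z - x * (y * z)))) := by rw [lin y x z]
      _ = p * ((x * y) * z - x * (y * z)) := by rw [mul_neg, neg_neg]
  -- L2: (x*p, y, z) = (x, p*y, z) for nuclear p (any ring)
  have L2n : ∀ x y z : A, ((x * n) * y) * z - (x * n) * (y * z)
      = (x * (n * y)) * z - x * ((n * y) * z) := by
    intro x y z
    rw [n2 x y, n2 x (y * z), n1 y z]
  -- Evaluate X := ((a*n)*(m*b))*c - (a*n)*((m*b)*c) in two ways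
  have e1 : ((a * n) * (m * b)) * c - (a * n) * ((m * b) * c)
      = (n * m) * ((a * b) * c - a * (b * c)) := by
    rw [L2n a (m * b) c, L3 n n1 a (m * b) c, L3 m m1 a b c, ← n1 m ((a * b) * c - a * (b * c))]
  have e2 : ((a * n) * (m * b)) * c - (a * n) * ((m * b) * c)
      = (m * n) * ((a * b) * c - a * (b * c)) := by
    rw [L3 m m1 (a * n) b c, L2n a b c, L3 n n1 a b c, ← m1 n ((a * b) * c - a * (b * c))]
  rw [sub_mul, ← e1, ← e2, sub_self]
end

section
/- Let A be an alternative ring and N(A) its nucleus. Then [N(A), A] ⊆ N(A): for any n ∈ N(A) and a ∈ A, the commutator n·a − a·n lies in N(A). -/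
namespace NucleusAux

variable {A : Type*} [NonUnitalNonAssocRing A]

/-- The associator. -/
def asc (x y z : A) : A := (x * y) * z - x * (y * z)

lemma asc_add_left (x x' y z : A) : asc (x + x') y z = asc x y z + asc x' y z := by
  simp [asc, add_mul, mul_add]; abel

lemma asc_add_mid (x y y' z : A) : asc x (y + y') z = asc x y z + asc x y' z := by
  simp [asc, add_mul, mul_add]; abel

lemma asc_add_right (x y z z' : A) : asc x y (z + z') = asc x y z + asc x y z' := by
  simp [asc, add_mul, mul_add]; abel

lemma asc_sub_left (x x' y z : A) : asc (x - x') y z = asc x y z - asc x' y z := by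
  simp [asc, sub_mul, mul_sub]; abel

/-- Teichmüller identity (holds in any nonassociative ring). -/
lemma teich (w x y z : A) :
    asc (w * x) y z - asc w (x * y) z + asc w x (y * z)
      = w * asc x y z + asc w x y * z := by
  simp [asc, mul_sub, sub_mul]; abel

lemma asc_self_left (hl : ∀ x y : A, (x * x) * y = x * (x * y)) (x z : A) :
    asc x x z = 0 := sub_eq_zero_of_eq (hl x z)

lemma asc_self_right (hr : ∀ x y : A, (y * x) * x = y * (x * x)) (x z : A) :
    asc z x x = 0 := sub_eq_zero_of_eq (hr x z)

lemma swap12 (hl : ∀ x y : A, (x * x) * y = x * (x * y)) (x y z : A) :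
    asc x y z = - asc y x z := by
  have h := asc_self_left hl (x + y) z
  rw [asc_add_left, asc_add_mid, asc_add_mid, asc_self_left hl, asc_self_left hl] at h
  simp only [zero_add, add_zero] at h
  exact eq_neg_of_add_eq_zero_left h

lemma swap23 (hr : ∀ x y : A, (y * x) * x = y * (x * x)) (x y z : A) :
    asc x y z = - asc x z y := by
  have h := asc_self_right hr (y + z) x
  rw [asc_add_mid, asc_add_right, asc_add_right, asc_self_right hr, asc_self_right hr] at h
  simp only [zero_add, add_zero] at h
  exact eq_neg_of_add_eq_zero_left h

lemma cyc (hl : ∀ x y : A, (x * x) * y = x * (x * y))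
    (hr : ∀ x y : A, (y * x) * x = y * (x * x)) (x y z : A) :
    asc x y z = asc y z x := by
  rw [swap12 hl, swap23 hr, neg_neg]

end NucleusAux

/-- In an alternative ring, `[N(A), A] ⊆ N(A)`. -/
theorem nucleus_comm_mem {A : Type*} [NonUnitalNonAssocRing A]
    (hl : ∀ x y : A, (x * x) * y = x * (x * y))
    (hr : ∀ x y : A, (y * x) * x = y * (x * x))
    (n : A) (hn : n ∈ nucleus A) (a : A) :
    n * a - a * n ∈ nucleus A := by
  open NucleusAux in
  have h1 : ∀ x y : A, asc n x y = 0 := fun x y => (hn x y).1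
  have h2 : ∀ x y : A, asc x n y = 0 := fun x y => (hn x y).2.1
  have h3 : ∀ x y : A, asc x y n = 0 := fun x y => (hn x y).2.2
  -- Teichmüller with w = n : asc (n*x) y z = n * asc x y z
  have spec1 : ∀ x y z : A, asc (n * x) y z = n * asc x y z := by
    intro x y z
    have h := teich n x y z
    rw [h1, h1, h1] at h
    simpa using h
  -- Teichmüller with x = n : asc (w*n) y z = asc w (n*y) z
  have spec2 : ∀ w y z : A, asc (w * n) y z = asc w (n * y) z := by
    intro w y z
    have h := teich w n y z
    rw [h2, h2, h1] at h
    simpa [sub_eq_zero] using h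
  -- the commutator is an "associator annihilator" in the first slot
  have key : ∀ x y : A, asc (n * a - a * n) x y = 0 := by
    intro x y
    rw [asc_sub_left, spec1, spec2, cyc hl hr a (n * x) y, spec1,
      cyc hl hr x y a, cyc hl hr y a x, sub_self]
  intro x y
  have k2 : asc x (n * a - a * n) y = 0 := by
    rw [swap12 hl x _ y, key, neg_zero]
  have k3 : asc x y (n * a - a * n) = 0 := by
    rw [cyc hl hr, cyc hl hr, key]
  exact ⟨key x y, k2, k3⟩
end

section
/- Let A be a graded ring (graded by ℕ, with A = ⊕_{d≥0} A_d and A_d·A_e ⊆ A_{d+e}), generated as a ring by its component A_1, and let n ≥ 1. Define the Veronese subring V = ⊕_{n | d} A_d. Suppose there exists N₀ such that A_d ⊆ V·A + A·V for all d ≥ N₀ (where A·V denotes the set of finite sums of products a·v). If each A_d is a finitely generated abelian group (or finite-dimensional vector space), then V is a finitely generated ring. -/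
section Aux

variable {k A : Type*} [Field k] [NonUnitalNonAssocRing A]
    [Module k A] [SMulCommClass k A A] [IsScalarTower k A A]
    (𝒜 : ℕ → Submodule k A) [SetLike.GradedMul 𝒜] [DirectSum.Decomposition 𝒜]

/-- If `x` lies in a supremum of submodules `B e ≤ 𝒜 e`, then each homogeneous
component of `x` lies in the corresponding `B`. -/
lemma veronese_aux_comp_mem (B : ℕ → Submodule k A) (hB : ∀ e, B e ≤ 𝒜 e) {x : A}
    (hx : x ∈ ⨆ e, B e) (d : ℕ) : (DirectSum.decompose 𝒜 x d : A) ∈ B d := by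
  refine Submodule.iSup_induction (motive := fun y => (DirectSum.decompose 𝒜 y d : A) ∈ B d)
    B hx ?_ ?_ ?_
  · intro e y hy
    by_cases h : e = d
    · subst h
      rw [DirectSum.decompose_of_mem_same 𝒜 (hB e hy)]
      exact hy
    · rw [DirectSum.decompose_of_mem_ne 𝒜 (hB e hy) h]
      exact (B d).zero_mem
  · simp
  · intro y z hy hz
    rw [DirectSum.decompose_add]
    simpa using (B d).add_mem hy hz

/-- To show that a product lies in a submodule it suffices to handle all products of
homogeneous components. -/
lemma veronese_aux_mul_mem (x y : A) (T : Submodule k A)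
    (h : ∀ i j : ℕ, (DirectSum.decompose 𝒜 x i : A) * (DirectSum.decompose 𝒜 y j : A) ∈ T) :
    x * y ∈ T := by
  classical
  have hxy : x * y = ∑ i ∈ DFinsupp.support (DirectSum.decompose 𝒜 x),
      ∑ j ∈ DFinsupp.support (DirectSum.decompose 𝒜 y),
      (DirectSum.decompose 𝒜 x i : A) * (DirectSum.decompose 𝒜 y j : A) := by
    conv_lhs => rw [← DirectSum.sum_support_decompose 𝒜 x,
      ← DirectSum.sum_support_decompose 𝒜 y]
    rw [Finset.sum_mul_sum]
  rw [hxy]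
  exact Submodule.sum_mem _ fun i _ => Submodule.sum_mem _ fun j _ => h i j

end Aux

/-- If an ℕ-graded (possibly nonassociative) algebra `A` over a field is generated
in degree 1, has finite-dimensional homogeneous components, and its Veronese
subalgebra `V = ⊕_{n∣d} A_d` satisfies `A_d ⊆ V·A + A·V` for all large `d`
(`V·A + A·V` being the span of all products `v·a` and `a·v`, `v ∈ V`, `a ∈ A`),
then `V` is finitely generated as an algebra. -/
theorem veronese_finitely_generated {k A : Type*} [Field k] [NonUnitalNonAssocRing A]
    [Module k A] [SMulCommClass k A A] [IsScalarTower k A A]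
    (𝒜 : ℕ → Submodule k A) [SetLike.GradedMul 𝒜] [DirectSum.Decomposition 𝒜]
    (hgen : NonUnitalAlgebra.adjoin k (𝒜 1 : Set A) = ⊤)
    (hfin : ∀ d, Module.Finite k (𝒜 d))
    (n : ℕ) (hn : 1 ≤ n)
    (V : Submodule k A) (hV : V = ⨆ d ∈ {d : ℕ | n ∣ d}, 𝒜 d)
    (hN : ∃ N₀ : ℕ, ∀ d ≥ N₀, (𝒜 d : Set A) ⊆
      (Submodule.span k ({x : A | ∃ v ∈ V, ∃ a : A, x = v * a} ∪
        {x : A | ∃ v ∈ V, ∃ a : A, x = a * v}) : Set A)) :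
    ∃ S : Finset A, (S : Set A) ⊆ (V : Set A) ∧
      NonUnitalAlgebra.adjoin k (S : Set A) = NonUnitalAlgebra.adjoin k (V : Set A) := by
  classical
  obtain ⟨N₀, hN⟩ := hN
  -- Step 0 : `𝒜 0 = ⊥` since `A` is generated in degree 1.
  have h0 : ∀ x ∈ 𝒜 0, x = (0 : A) := by
    set B : ℕ → Submodule k A := fun e => if 1 ≤ e then 𝒜 e else ⊥ with hBdef
    have hBle : ∀ e, B e ≤ 𝒜 e := by
      intro e
      by_cases h : 1 ≤ e <;> simp [B, h]
    have hQmul : ∀ x y : A, x ∈ (⨆ e, B e) → y ∈ (⨆ e, B e) → x * y ∈ (⨆ e, B e) := by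
      intro x y hx hy
      refine veronese_aux_mul_mem 𝒜 x y _ ?_
      intro i j
      have hxi := veronese_aux_comp_mem 𝒜 B hBle hx i
      have hyj := veronese_aux_comp_mem 𝒜 B hBle hy j
      by_cases hi : 1 ≤ i
      · by_cases hj : 1 ≤ j
        · rw [hBdef] at hxi hyj
          simp only [if_pos hi] at hxi
          simp only [if_pos hj] at hyj
          have hm : (DirectSum.decompose 𝒜 x i : A) * (DirectSum.decompose 𝒜 y j : A)
              ∈ 𝒜 (i + j) := SetLike.mul_mem_graded hxi hyj
          refine le_iSup B (i + j) ?_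
          simp only [B, if_pos (show 1 ≤ i + j by omega)]
          exact hm
        · rw [hBdef] at hyj
          simp only [if_neg hj, Submodule.mem_bot] at hyj
          rw [hyj, mul_zero]
          exact Submodule.zero_mem _
      · rw [hBdef] at hxi
        simp only [if_neg hi, Submodule.mem_bot] at hxi
        rw [hxi, zero_mul]
        exact Submodule.zero_mem _
    have hadj : NonUnitalAlgebra.adjoin k (𝒜 1 : Set A)
        ≤ (⨆ e, B e : Submodule k A).toNonUnitalSubalgebra hQmul := by
      refine NonUnitalAlgebra.adjoin_le ?_
      intro x hx
      have : (𝒜 1 : Submodule k A) ≤ ⨆ e, B e := by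
        refine le_trans ?_ (le_iSup B 1)
        simp [B]
      exact this hx
    intro x hx0
    have hxQ : x ∈ (⨆ e, B e : Submodule k A) := by
      have : x ∈ NonUnitalAlgebra.adjoin k (𝒜 1 : Set A) := by
        rw [hgen]; trivial
      exact hadj this
    have hc := veronese_aux_comp_mem 𝒜 B hBle hxQ 0
    rw [DirectSum.decompose_of_mem_same 𝒜 hx0] at hc
    simpa [B] using hc
  -- finite spanning sets of the homogeneous components
  have hfg : ∀ d : ℕ, ∃ s : Finset A, ↑s ⊆ (𝒜 d : Set A) ∧ Submodule.span k (↑s) = 𝒜 d := by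
    intro d
    obtain ⟨s, hs⟩ := (Module.Finite.iff_fg (N := 𝒜 d)).mp (hfin d)
    exact ⟨s, by rw [← hs]; exact Submodule.subset_span, hs⟩
  choose f hf1 hf2 using hfg
  set S : Finset A := (Finset.range N₀).biUnion (fun d => if n ∣ d then f d else ∅) with hSdef
  -- rewriting of `V` as a plain supremum
  have hVsup : V = ⨆ d, (if n ∣ d then 𝒜 d else ⊥) := by
    rw [hV]
    apply le_antisymm
    · refine iSup₂_le fun d hd => ?_
      refine le_trans ?_ (le_iSup _ d)
      simp only [Set.mem_setOf_eq] at hd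
      rw [if_pos hd]
    · refine iSup_le fun d => ?_
      by_cases hd : n ∣ d
      · rw [if_pos hd]
        exact le_iSup₂ (f := fun d (_ : d ∈ {d : ℕ | n ∣ d}) => 𝒜 d) d hd
      · rw [if_neg hd]; exact bot_le
  have hBVle : ∀ e, (if n ∣ e then 𝒜 e else ⊥) ≤ 𝒜 e := by
    intro e; by_cases h : n ∣ e <;> simp [h]
  have hdV : ∀ d, n ∣ d → 𝒜 d ≤ V := by
    intro d hd
    rw [hVsup]
    refine le_trans ?_ (le_iSup _ d)
    rw [if_pos hd]
  have hSV : (S : Set A) ⊆ (V : Set A) := by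
    intro x hx
    simp only [hSdef, Finset.coe_biUnion, Finset.mem_coe, Finset.mem_range,
      Set.mem_iUnion] at hx
    obtain ⟨d, _, hxd⟩ := hx
    by_cases h : n ∣ d
    · rw [if_pos h] at hxd
      exact hdV d h (hf1 d hxd)
    · rw [if_neg h] at hxd
      simp at hxd
  set P : NonUnitalSubalgebra k A := NonUnitalAlgebra.adjoin k (S : Set A) with hPdef
  -- the graded pieces of products
  set C : ℕ → Submodule k A := fun e => Submodule.span k
    {x : A | ∃ i j : ℕ, i + j = e ∧ n ∣ i ∧ ∃ a ∈ 𝒜 i, ∃ b ∈ 𝒜 j, x = a * b ∨ x = b * a}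
    with hCdef
  have hCle : ∀ e, C e ≤ 𝒜 e := by
    intro e
    rw [hCdef]
    refine Submodule.span_le.2 ?_
    rintro x ⟨i, j, rfl, -, a, ha, b, hb, rfl | rfl⟩
    · exact SetLike.mul_mem_graded ha hb
    · have := SetLike.mul_mem_graded hb ha
      rwa [Nat.add_comm j i] at this
  -- generators of the span lie in `⨆ e, C e`
  have hgenmem : ({x : A | ∃ v ∈ V, ∃ a : A, x = v * a} ∪
      {x : A | ∃ v ∈ V, ∃ a : A, x = a * v}) ⊆ ((⨆ e, C e : Submodule k A) : Set A) := by
    rintro x (⟨v, hv, a, rfl⟩ | ⟨v, hv, a, rfl⟩)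
    · refine veronese_aux_mul_mem 𝒜 v a _ ?_
      intro i j
      have hvi : (DirectSum.decompose 𝒜 v i : A) ∈ (if n ∣ i then 𝒜 i else ⊥) :=
        veronese_aux_comp_mem 𝒜 _ hBVle (hVsup ▸ hv) i
      by_cases hi : n ∣ i
      · rw [if_pos hi] at hvi
        refine le_iSup C (i + j) ?_
        rw [hCdef]
        refine Submodule.subset_span ?_
        exact ⟨i, j, rfl, hi, _, hvi, _, SetLike.coe_mem (DirectSum.decompose 𝒜 a j),
          Or.inl rfl⟩
      · rw [if_neg hi, Submodule.mem_bot] at hvi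
        rw [hvi, zero_mul]
        exact Submodule.zero_mem _
    · refine veronese_aux_mul_mem 𝒜 a v _ ?_
      intro i j
      have hvj : (DirectSum.decompose 𝒜 v j : A) ∈ (if n ∣ j then 𝒜 j else ⊥) :=
        veronese_aux_comp_mem 𝒜 _ hBVle (hVsup ▸ hv) j
      by_cases hj : n ∣ j
      · rw [if_pos hj] at hvj
        refine le_iSup C (i + j) ?_
        rw [hCdef]
        refine Submodule.subset_span ?_
        exact ⟨j, i, Nat.add_comm j i, hj, _, hvj, _,
          SetLike.coe_mem (DirectSum.decompose 𝒜 a i), Or.inr rfl⟩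
      · rw [if_neg hj, Submodule.mem_bot] at hvj
        rw [hvj, mul_zero]
        exact Submodule.zero_mem _
  -- main induction
  have main : ∀ d : ℕ, n ∣ d → 𝒜 d ≤ P.toSubmodule := by
    intro d
    induction d using Nat.strong_induction_on with
    | _ d ih =>
      intro hd
      by_cases hdN : d < N₀
      · -- base case : spanned by `S`
        have hsub : (f d : Set A) ⊆ (S : Set A) := by
          intro x hx
          simp only [hSdef, Finset.coe_biUnion, Finset.mem_coe, Finset.mem_range,
            Set.mem_iUnion]
          exact ⟨d, hdN, by rw [if_pos hd]; exact hx⟩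
        calc 𝒜 d = Submodule.span k (f d : Set A) := (hf2 d).symm
          _ ≤ Submodule.span k (S : Set A) := Submodule.span_mono hsub
          _ ≤ P.toSubmodule := Submodule.span_le.2 (NonUnitalAlgebra.subset_adjoin k)
      · -- inductive step
        intro x hx
        have hxspan := hN d (le_of_not_gt hdN) hx
        have hxC : x ∈ (⨆ e, C e : Submodule k A) :=
          (Submodule.span_le.2 hgenmem) hxspan
        have hxCd : x ∈ C d := by
          have hc := veronese_aux_comp_mem 𝒜 C hCle hxC d
          rwa [DirectSum.decompose_of_mem_same 𝒜 hx] at hc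
        have hCdP : C d ≤ P.toSubmodule := by
          rw [hCdef]
          refine Submodule.span_le.2 ?_
          rintro y ⟨i, j, hij, hi, a, ha, b, hb, rfl | rfl⟩
          all_goals {
            rcases Nat.eq_zero_or_pos i with hi0 | hi0
            · subst hi0
              rw [h0 a ha]
              simp only [zero_mul, mul_zero]
              exact Submodule.zero_mem _
            rcases Nat.eq_zero_or_pos j with hj0 | hj0
            · subst hj0
              rw [h0 b hb]
              simp only [zero_mul, mul_zero]
              exact Submodule.zero_mem _
            have hjd : n ∣ j := by
              have h1 : n ∣ d - i := Nat.dvd_sub hd hi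
              have h2 : d - i = j := by omega
              rwa [h2] at h1
            have hPi : a ∈ P := ih i (by omega) hi ha
            have hPj : b ∈ P := ih j (by omega) hjd hb
            first
              | exact P.mul_mem hPi hPj
              | exact P.mul_mem hPj hPi
          }
        exact hCdP hxCd
  have hVP : V ≤ P.toSubmodule := by
    rw [hVsup]
    refine iSup_le fun d => ?_
    by_cases hd : n ∣ d
    · rw [if_pos hd]; exact main d hd
    · rw [if_neg hd]; exact bot_le
  refine ⟨S, hSV, le_antisymm ?_ ?_⟩
  · exact NonUnitalAlgebra.adjoin_le (hSV.trans (NonUnitalAlgebra.subset_adjoin k))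
  · exact NonUnitalAlgebra.adjoin_le (fun x hx => hVP hx)
end
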